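/- Griffiths' first inequality: for a finite set Λ, spins σ ∈ {±1}^Λ, and Hamiltonian −H(σ) = Σ_{A ⊆ Λ} K_A Π_{i∈A} σ_i with all couplings K_A ≥ 0, the Gibbs expectation ω(Π_{i∈B} σ_i) = Σ_σ (Π_{i∈B} σ_i) e^{−H(σ)} / Σ_σ e^{−H(σ)} is nonnegative for every B ⊆ Λ. -/

import Mathlib

/-!
Since every product of spins `t = ∏_{i∈A} σ_i` is `±1`, `exp (K t) = cosh K + t sinh K`.
Multiplying these out over all `A` writes the Boltzmann weight as a combination of spin
monomials with coefficients `∏ sinh K_A ∏ cosh K_A ≥ 0`, and the sum over all configurations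
of a spin monomial `∏_i σ_i ^ m_i` factorises as `∏_i (1 + (-1) ^ m_i) ≥ 0`.
-/

open Finset

theorem Real.exp_mul_of_sq_eq_one (K : ℝ) {t : ℝ} (ht : t ^ 2 = 1) :
    Real.exp (K * t) = t * Real.sinh K + Real.cosh K := by
  rcases sq_eq_one_iff.mp ht with rfl | rfl
  · rw [mul_one, one_mul, add_comm, Real.cosh_add_sinh]
  · rw [mul_neg_one, neg_one_mul, ← Real.cosh_sub_sinh, sub_eq_neg_add]

theorem Real.exp_sum_mul_of_sq_eq_one {ι : Type*} [DecidableEq ι] (s : Finset ι) (K t : ι → ℝ)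
    (ht : ∀ a ∈ s, t a ^ 2 = 1) :
    Real.exp (∑ a ∈ s, K a * t a) =
      ∑ S ∈ s.powerset,
        (∏ a ∈ S, t a) * ((∏ a ∈ S, Real.sinh (K a)) * ∏ a ∈ s \ S, Real.cosh (K a)) := by
  rw [Real.exp_sum, prod_congr rfl fun a ha => Real.exp_mul_of_sq_eq_one (K a) (ht a ha),
    prod_add]
  simp only [prod_mul_distrib, mul_assoc]

def spin (b : Bool) : ℝ := if b then 1 else -1

theorem spin_sq (b : Bool) : spin b ^ 2 = 1 := by
  cases b <;> norm_num [spin]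

theorem sum_spin_pow_nonneg (n : ℕ) : 0 ≤ ∑ b : Bool, spin b ^ n := by
  rcases neg_one_pow_eq_or ℝ n with h | h <;> simp [spin, h]

theorem prod_spin_sq {Λ : Type*} (σ : Λ → Bool) (A : Finset Λ) :
    (∏ i ∈ A, spin (σ i)) ^ 2 = 1 := by
  simp [← prod_pow, spin_sq]

section SpinMonomials

variable {Λ : Type*} [Fintype Λ]

variable (Λ) in
def spinMonomials : Submonoid ((Λ → Bool) → ℝ) where
  carrier := {f | ∃ m : Λ → ℕ, f = fun σ => ∏ i, spin (σ i) ^ m i}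
  mul_mem' := by
    rintro _ _ ⟨m, rfl⟩ ⟨n, rfl⟩
    exact ⟨m + n, funext fun σ => by simp only [Pi.add_apply, pow_add, prod_mul_distrib]; rfl⟩
  one_mem' := ⟨0, funext fun σ => by simp⟩

theorem prod_spin_mem_spinMonomials [DecidableEq Λ] (A : Finset Λ) :
    (fun σ => ∏ i ∈ A, spin (σ i)) ∈ spinMonomials Λ := by
  refine ⟨fun i => if i ∈ A then 1 else 0, funext fun σ => ?_⟩
  rw [← Fintype.prod_ite_mem A]
  exact prod_congr rfl fun i _ => by by_cases h : i ∈ A <;> simp [h]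

theorem sum_nonneg_of_mem_spinMonomials [DecidableEq Λ] {f : (Λ → Bool) → ℝ}
    (hf : f ∈ spinMonomials Λ) : 0 ≤ ∑ σ, f σ := by
  obtain ⟨m, rfl⟩ := hf
  rw [← Fintype.prod_sum fun i b => spin b ^ m i]
  exact prod_nonneg fun i _ => sum_spin_pow_nonneg (m i)

theorem sum_prod_spin_mul_prod_prod_spin_nonneg [DecidableEq Λ] (B : Finset Λ)
    (S : Finset (Finset Λ)) :
    0 ≤ ∑ σ : Λ → Bool, (∏ i ∈ B, spin (σ i)) * ∏ A ∈ S, ∏ i ∈ A, spin (σ i) := by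
  have hmem := (spinMonomials Λ).mul_mem (prod_spin_mem_spinMonomials B)
    ((spinMonomials Λ).prod_mem (t := S) fun A _ => prod_spin_mem_spinMonomials A)
  simpa only [Pi.mul_apply, prod_apply] using sum_nonneg_of_mem_spinMonomials hmem

end SpinMonomials

/-- Griffiths' first inequality: for a ferromagnetic Hamiltonian
`−H(σ) = Σ_{A ⊆ Λ} K_A Π_{i∈A} σ_i` with all `K_A ≥ 0`, every Gibbs expectation of a
product of spins is nonnegative: `ω(Π_{i∈B} σ_i) ≥ 0`. -/
theorem griffiths_first_inequality
    {Λ : Type*} [Fintype Λ] [DecidableEq Λ]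
    (K : Finset Λ → ℝ) (hK : ∀ A, 0 ≤ K A)
    (sp : (Λ → Bool) → Λ → ℝ) (hsp : ∀ σ i, sp σ i = if σ i then 1 else -1)
    (B : Finset Λ) :
    0 ≤ (∑ σ : Λ → Bool, (∏ i ∈ B, sp σ i) *
          Real.exp (∑ A : Finset Λ, K A * ∏ i ∈ A, sp σ i))
        / (∑ σ : Λ → Bool, Real.exp (∑ A : Finset Λ, K A * ∏ i ∈ A, sp σ i)) := by
  obtain rfl : sp = fun σ i => spin (σ i) := funext₂ hsp
  refine div_nonneg ?_ (sum_nonneg fun σ _ => (Real.exp_pos _).le)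
  have hcoef (S : Finset (Finset Λ)) :
      0 ≤ (∏ A ∈ S, Real.sinh (K A)) * ∏ A ∈ univ \ S, Real.cosh (K A) :=
    mul_nonneg (prod_nonneg fun A _ => Real.sinh_nonneg_iff.mpr (hK A))
      (prod_nonneg fun A _ => (Real.cosh_pos _).le)
  simp only [Real.exp_sum_mul_of_sq_eq_one _ K _ fun A _ => prod_spin_sq _ A, mul_sum]
  rw [sum_comm]
  refine sum_nonneg fun S _ => ?_
  simpa only [← mul_assoc, ← sum_mul] using
    mul_nonneg (sum_prod_spin_mul_prod_prod_spin_nonneg B S) (hcoef S)
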